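/- arXiv:2604.01778 — 3 statements merged into one kernel-verified Lean document; each statement's English description precedes it below -/
import Mathlib

section
/- Define f : ℝ → ℝ by f(x) = cos(x) / (1 − (2x/π)²) for x ∉ {−π/2, π/2} and f(±π/2) = π/4 (the removable-singularity value). Then |f(x)| ≤ 1 for all real x, with equality if and only if x = 0. -/
/-- The one-dimensional TE₁₀ pattern factor `cos x / (1 − (2x/π)²)`, extended through
its removable singularities at `x = ±π/2` by the value `π/4`. -/
noncomputable def patternFactor (x : ℝ) : ℝ :=
  if x = Real.pi / 2 ∨ x = -(Real.pi / 2) then Real.pi / 4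
  else Real.cos x / (1 - (2 * x / Real.pi) ^ 2)

lemma abs_sin_lt' {t : ℝ} (ht : 0 < t) : |Real.sin t| < t := by
  rcases le_or_gt t Real.pi with h | h
  · rw [abs_of_nonneg (Real.sin_nonneg_of_nonneg_of_le_pi ht.le h)]
    exact Real.sin_lt ht
  · have h1 : |Real.sin t| ≤ 1 := abs_le.mpr ⟨Real.neg_one_le_sin t, Real.sin_le_one t⟩
    nlinarith [Real.pi_gt_three]

set_option maxHeartbeats 1000000 in
lemma key_pos {x : ℝ} (hx : 0 < x) (hne : x ≠ Real.pi / 2) :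
    |Real.cos x| < |1 - (2 * x / Real.pi) ^ 2| := by
  have hπ := Real.pi_pos
  have hπ' : Real.pi ≠ 0 := ne_of_gt hπ
  rcases lt_or_gt_of_ne hne with h | h
  · -- 0 < x < π/2
    have hcos : 0 < Real.cos x := Real.cos_pos_of_mem_Ioo ⟨by linarith, h⟩
    have hden : 0 < 1 - (2 * x / Real.pi) ^ 2 := by
      have h1 : 2 * x / Real.pi < 1 := by rw [div_lt_one hπ]; linarith
      have h0 : 0 < 2 * x / Real.pi := by positivity
      nlinarith
    rw [abs_of_pos hcos, abs_of_pos hden]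
    have hsq : (2 * x / Real.pi) ^ 2 = 4 * x ^ 2 / Real.pi ^ 2 := by ring
    rcases le_or_gt x (Real.pi * (Real.pi - 2) / 4) with hc | hc
    · have hx1 : |x| ≤ 1 := by
        rw [abs_of_pos hx]
        nlinarith [Real.pi_lt_d2, Real.pi_gt_three]
      have hb := Real.cos_bound hx1
      rw [abs_le] at hb
      have hb2 : Real.cos x ≤ 1 - x ^ 2 / 2 + x ^ 4 * (5 / 96) := by
        have h5 := hb.2
        rw [abs_of_pos hx] at h5
        linarith
      have hx91 : x ≤ 0.91 := by nlinarith [Real.pi_lt_d2, Real.pi_gt_three]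
      have hx2 : x ^ 2 ≤ 0.8281 := by nlinarith
      have hπ2 : (9.86 : ℝ) < Real.pi ^ 2 := by nlinarith [Real.pi_gt_d6]
      have hx2pos : (0 : ℝ) < x ^ 2 := by positivity
      have hA : 0.45 * x ^ 2 ≤ x ^ 2 / 2 - x ^ 4 * (5 / 96) := by
        nlinarith [mul_le_mul_of_nonneg_left hx2 (sq_nonneg x)]
      have hB : 4 * x ^ 2 < 0.45 * x ^ 2 * Real.pi ^ 2 := by
        nlinarith [mul_lt_mul_of_pos_left hπ2 (show (0:ℝ) < 0.45 * x ^ 2 by positivity)]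
      have hkey : 4 * x ^ 2 / Real.pi ^ 2 < x ^ 2 / 2 - x ^ 4 * (5 / 96) := by
        rw [div_lt_iff₀ (by positivity)]
        nlinarith [mul_le_mul_of_nonneg_right hA (sq_nonneg Real.pi)]
      rw [hsq]; linarith
    · have ht : 0 < Real.pi / 2 - x := by linarith
      have hs : Real.cos x < Real.pi / 2 - x := by
        have h5 := Real.sin_lt ht
        rwa [Real.sin_pi_div_two_sub] at h5
      have h2 : 1 - 4 * x ^ 2 / Real.pi ^ 2 - (Real.pi / 2 - x)
          = 4 / Real.pi ^ 2 * (Real.pi / 2 - x) * (x - Real.pi * (Real.pi - 2) / 4) := by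
        field_simp; ring
      have h3 : 0 < 4 / Real.pi ^ 2 * (Real.pi / 2 - x) * (x - Real.pi * (Real.pi - 2) / 4) := by
        have h6 : 0 < x - Real.pi * (Real.pi - 2) / 4 := by linarith
        positivity
      rw [hsq]; linarith
  · -- x > π/2
    have ht : 0 < x - Real.pi / 2 := by linarith
    have h1 : Real.cos x = -Real.sin (x - Real.pi / 2) := by
      have h5 := Real.cos_add_pi_div_two (x - Real.pi / 2)
      simpa using h5
    have hcos : |Real.cos x| < x - Real.pi / 2 := by
      rw [h1, abs_neg]; exact abs_sin_lt' ht
    have hgt : 1 < 2 * x / Real.pi := by rw [lt_div_iff₀ hπ]; linarith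
    have hden : 1 - (2 * x / Real.pi) ^ 2 < 0 := by
      have h6 : (1 : ℝ) ^ 2 < (2 * x / Real.pi) ^ 2 :=
        pow_lt_pow_left₀ hgt zero_le_one two_ne_zero
      simpa using h6
    rw [abs_of_neg hden]
    have hsq : (2 * x / Real.pi) ^ 2 = 4 * x ^ 2 / Real.pi ^ 2 := by ring
    have h2 : -(1 - 4 * x ^ 2 / Real.pi ^ 2) - (x - Real.pi / 2)
        = 4 / Real.pi ^ 2 * (x - Real.pi / 2) * (x - Real.pi * (Real.pi - 2) / 4) := by
      field_simp; ring
    have h4 : 0 < x - Real.pi * (Real.pi - 2) / 4 := by nlinarith [Real.pi_lt_d2]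
    have h3 : 0 ≤ 4 / Real.pi ^ 2 * (x - Real.pi / 2) * (x - Real.pi * (Real.pi - 2) / 4) := by
      positivity
    rw [hsq]; linarith

lemma key_lt {x : ℝ} (hx : x ≠ 0) (h1 : x ≠ Real.pi / 2) (h2 : x ≠ -(Real.pi / 2)) :
    |Real.cos x| < |1 - (2 * x / Real.pi) ^ 2| := by
  rcases hx.lt_or_gt with h | h
  · have h5 := key_pos (x := -x) (by linarith) (by intro hc; apply h2; linarith)
    have e1 : Real.cos (-x) = Real.cos x := Real.cos_neg x
    have e2 : (2 * -x / Real.pi) ^ 2 = (2 * x / Real.pi) ^ 2 := by ring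
    rwa [e1, e2] at h5
  · exact key_pos h h1

lemma pf_lt {x : ℝ} (hx : x ≠ 0) : |patternFactor x| < 1 := by
  unfold patternFactor
  split_ifs with h
  · rw [abs_of_pos (by positivity)]
    nlinarith [Real.pi_lt_d2]
  · push_neg at h
    obtain ⟨h1, h2⟩ := h
    have hπ := Real.pi_pos
    have hden : 1 - (2 * x / Real.pi) ^ 2 ≠ 0 := by
      intro hd
      have h3 : (2 * x / Real.pi - 1) * (2 * x / Real.pi + 1) = 0 := by linear_combination -hd
      rcases mul_eq_zero.mp h3 with h4 | h4
      · apply h1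
        have h5 : 2 * x / Real.pi = 1 := by linarith
        field_simp at h5; linarith
      · apply h2
        have h5 : 2 * x / Real.pi = -1 := by linarith
        field_simp at h5; linarith
    rw [abs_div, div_lt_one (abs_pos.mpr hden)]
    exact key_lt hx h1 h2

lemma pf_zero : patternFactor 0 = 1 := by
  have hπ := Real.pi_pos
  have h : ¬((0 : ℝ) = Real.pi / 2 ∨ (0 : ℝ) = -(Real.pi / 2)) := by
    push_neg
    constructor <;> intro h <;> nlinarith
  rw [patternFactor, if_neg h]
  norm_num

/-- **Pattern factor bound.** `|patternFactor x| ≤ 1` for all real `x`, with equality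
if and only if `x = 0`. -/
theorem patternFactor_le_one :
    (∀ x : ℝ, |patternFactor x| ≤ 1) ∧ (∀ x : ℝ, |patternFactor x| = 1 ↔ x = 0) := by
  constructor
  · intro x
    by_cases hx : x = 0
    · subst hx; rw [pf_zero]; norm_num
    · exact (pf_lt hx).le
  · intro x
    constructor
    · intro h
      by_contra hx
      exact absurd h (ne_of_lt (pf_lt hx))
    · rintro rfl
      rw [pf_zero]; norm_num
end

section
/- Let α_A > 0 and ρ > 0, and define F(d) = −α_W + α_A·d/√(d² + ρ²) + 2d/(d² + ρ²) (for any fixed α_W ∈ ℝ). Then: (i) for every d with 0 ≤ d ≤ ρ, F′(d) > 0; and (ii) for every d > ρ, F′(d) = 0 if and only if α_A²·ρ⁴·(d² + ρ²) = 4·(d² − ρ²)². -/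
/-- **Extrema of the optimality function.** With `α_A > 0`, `ρ > 0` and
`F(d) = −α_W + α_A d/√(d² + ρ²) + 2d/(d² + ρ²)`:
(i) `F′(d) > 0` for every `0 ≤ d ≤ ρ`; and
(ii) for every `d > ρ`, `F′(d) = 0` iff `α_A² ρ⁴ (d² + ρ²) = 4 (d² − ρ²)²`. -/
theorem optimality_function_extrema (αW αA ρ : ℝ) (hαA : 0 < αA) (hρ : 0 < ρ)
    (F : ℝ → ℝ)
    (hF : ∀ d : ℝ, F d = -αW + αA * d / Real.sqrt (d ^ 2 + ρ ^ 2) + 2 * d / (d ^ 2 + ρ ^ 2)) :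
    (∀ d : ℝ, 0 ≤ d → d ≤ ρ → 0 < deriv F d) ∧
      (∀ d : ℝ, ρ < d →
        (deriv F d = 0 ↔ αA ^ 2 * ρ ^ 4 * (d ^ 2 + ρ ^ 2) = 4 * (d ^ 2 - ρ ^ 2) ^ 2)) := by
  have hFfun : F = fun d : ℝ => -αW + αA * d / Real.sqrt (d ^ 2 + ρ ^ 2) + 2 * d / (d ^ 2 + ρ ^ 2) :=
    funext hF
  have key : ∀ d : ℝ, deriv F d =
      (αA * Real.sqrt (d ^ 2 + ρ ^ 2) - αA * d * (2 * d / (2 * Real.sqrt (d ^ 2 + ρ ^ 2)))) /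
        Real.sqrt (d ^ 2 + ρ ^ 2) ^ 2
      + (2 * (d ^ 2 + ρ ^ 2) - 2 * d * (2 * d)) / (d ^ 2 + ρ ^ 2) ^ 2 := by
    intro d
    have hs : (0:ℝ) < d ^ 2 + ρ ^ 2 := by positivity
    have hsne : d ^ 2 + ρ ^ 2 ≠ 0 := ne_of_gt hs
    have hrpos : 0 < Real.sqrt (d ^ 2 + ρ ^ 2) := Real.sqrt_pos.mpr hs
    have h1 : HasDerivAt (fun x : ℝ => x ^ 2 + ρ ^ 2) (2 * d) d := by
      simpa using (hasDerivAt_pow 2 d).add_const (ρ ^ 2)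
    have hsqrt : HasDerivAt (fun x : ℝ => Real.sqrt (x ^ 2 + ρ ^ 2))
        (2 * d / (2 * Real.sqrt (d ^ 2 + ρ ^ 2))) d := h1.sqrt hsne
    have hnum : HasDerivAt (fun x : ℝ => αA * x) αA d := by
      simpa using (hasDerivAt_id d).const_mul αA
    have hnum2 : HasDerivAt (fun x : ℝ => 2 * x) (2:ℝ) d := by
      simpa using (hasDerivAt_id d).const_mul (2:ℝ)
    have hterm1 := hnum.div hsqrt (ne_of_gt hrpos)
    have hterm2 := hnum2.div h1 hsne
    have hfinal := (hterm1.const_add (-αW)).add hterm2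
    rw [hFfun]
    exact hfinal.deriv
  constructor
  · intro d hd0 hdρ
    rw [key d]
    have hs : (0:ℝ) < d ^ 2 + ρ ^ 2 := by positivity
    have hrpos : 0 < Real.sqrt (d ^ 2 + ρ ^ 2) := Real.sqrt_pos.mpr hs
    have hr2 : Real.sqrt (d ^ 2 + ρ ^ 2) ^ 2 = d ^ 2 + ρ ^ 2 := Real.sq_sqrt hs.le
    set r := Real.sqrt (d ^ 2 + ρ ^ 2) with hrdef
    have t1 : 0 < (αA * r - αA * d * (2 * d / (2 * r))) / r ^ 2 := by
      apply div_pos _ (by positivity)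
      have hsimp : αA * d * (2 * d / (2 * r)) = αA * d ^ 2 / r := by
        field_simp
      rw [hsimp, sub_pos, div_lt_iff₀ hrpos]
      have hrr : r * r = d ^ 2 + ρ ^ 2 := by rw [← sq]; exact hr2
      rw [mul_assoc, hrr]
      nlinarith [mul_pos hαA (mul_pos hρ hρ)]
    have t2 : 0 ≤ (2 * (d ^ 2 + ρ ^ 2) - 2 * d * (2 * d)) / (d ^ 2 + ρ ^ 2) ^ 2 :=
      div_nonneg (by nlinarith) (by positivity)
    linarith
  · intro d hdρ
    rw [key d]
    have hd0 : 0 < d := lt_trans hρ hdρ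
    have hs : (0:ℝ) < d ^ 2 + ρ ^ 2 := by positivity
    have hsne : d ^ 2 + ρ ^ 2 ≠ 0 := ne_of_gt hs
    have hrpos : 0 < Real.sqrt (d ^ 2 + ρ ^ 2) := Real.sqrt_pos.mpr hs
    have hr2 : Real.sqrt (d ^ 2 + ρ ^ 2) ^ 2 = d ^ 2 + ρ ^ 2 := Real.sq_sqrt hs.le
    set r := Real.sqrt (d ^ 2 + ρ ^ 2) with hrdef
    have hρ2 : ρ ^ 2 = r ^ 2 - d ^ 2 := by linarith [hr2]
    have hd2ρ2 : ρ ^ 2 < d ^ 2 := by nlinarith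
    have hD : (αA * r - αA * d * (2 * d / (2 * r))) / r ^ 2
        + (2 * (d ^ 2 + ρ ^ 2) - 2 * d * (2 * d)) / (d ^ 2 + ρ ^ 2) ^ 2
        = (αA * ρ ^ 2 * (d ^ 2 + ρ ^ 2) - 2 * (d ^ 2 - ρ ^ 2) * r) / (r * (d ^ 2 + ρ ^ 2) ^ 2) := by
      rw [hρ2]
      have h1 : d ^ 2 + (r ^ 2 - d ^ 2) = r ^ 2 := by ring
      rw [h1]
      field_simp
      ring
    rw [hD]
    have hdenom : r * (d ^ 2 + ρ ^ 2) ^ 2 ≠ 0 := by positivity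
    rw [div_eq_zero_iff]
    have hnum : (αA * ρ ^ 2 * (d ^ 2 + ρ ^ 2) - 2 * (d ^ 2 - ρ ^ 2) * r = 0)
        ↔ αA * ρ ^ 2 * (d ^ 2 + ρ ^ 2) = 2 * (d ^ 2 - ρ ^ 2) * r := sub_eq_zero
    constructor
    · rintro (h | h)
      · have hab := hnum.mp h
        have hsq : (αA * ρ ^ 2 * (d ^ 2 + ρ ^ 2)) ^ 2 = (2 * (d ^ 2 - ρ ^ 2) * r) ^ 2 := by
          rw [hab]
        have hsq2 : αA ^ 2 * ρ ^ 4 * (d ^ 2 + ρ ^ 2) * (d ^ 2 + ρ ^ 2)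
            = 4 * (d ^ 2 - ρ ^ 2) ^ 2 * (d ^ 2 + ρ ^ 2) := by
          have : (2 * (d ^ 2 - ρ ^ 2) * r) ^ 2 = 4 * (d ^ 2 - ρ ^ 2) ^ 2 * r ^ 2 := by ring
          rw [this, hr2] at hsq
          linear_combination hsq
        exact mul_right_cancel₀ hsne hsq2
      · exact absurd h hdenom
    · intro h
      left
      apply hnum.mpr
      set a := αA * ρ ^ 2 * (d ^ 2 + ρ ^ 2) with hadef
      set b := 2 * (d ^ 2 - ρ ^ 2) * r with hbdef
      have ha : 0 < a := by rw [hadef]; positivity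
      have hb : 0 < b := by
        rw [hbdef]
        apply mul_pos (by nlinarith) hrpos
      have hsq : a ^ 2 = b ^ 2 := by
        rw [hadef, hbdef]
        have hb2 : (2 * (d ^ 2 - ρ ^ 2) * r) ^ 2 = 4 * (d ^ 2 - ρ ^ 2) ^ 2 * r ^ 2 := by ring
        rw [hb2, hr2]
        linear_combination (d ^ 2 + ρ ^ 2) * h
      have hfac : (a - b) * (a + b) = 0 := by linear_combination hsq
      rcases mul_eq_zero.mp hfac with h0 | h0
      · linarith
      · linarith
end

section
/- Let P, σ₁², σ₂² > 0, and let h₁, h₂ : ℝ → ℝ be differentiable functions with h₁(x) > 0 and h₂(x) > 0 for all x. Define w(x) = 1/2 + σ₂²/(2P·h₂(x)) − σ₁²/(2P·h₁(x)) and R₁(x) = log₂(1 + P·w(x)·h₁(x)/σ₁²). If x* is a point with h₁′(x*) = 0, then R₁′(x*) = −(σ₂²/(2·ln 2)) · ( h₂′(x*)/h₂(x*)² ) / ( σ₁²/h₁(x*) + P·w(x*) ). -/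
set_option maxHeartbeats 1000000 in
/-- **Rate derivative at the individual optimum (Theorem 4 / Appendix D).** Let
`h₁, h₂ : ℝ → ℝ` be differentiable and positive, `P, σ₁², σ₂² > 0`,
`w(x) = 1/2 + σ₂²/(2P h₂(x)) − σ₁²/(2P h₁(x))` and
`R₁(x) = log₂(1 + P w(x) h₁(x)/σ₁²)`. If `h₁′(x*) = 0`, then
`R₁′(x*) = −(σ₂²/(2 ln 2)) · (h₂′(x*)/h₂(x*)²) / (σ₁²/h₁(x*) + P w(x*))`. -/
theorem rate_derivative_at_optimum (P σ1sq σ2sq : ℝ)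
    (hP : 0 < P) (hσ1 : 0 < σ1sq) (hσ2 : 0 < σ2sq)
    (h1 h2 : ℝ → ℝ) (hd1 : Differentiable ℝ h1) (hd2 : Differentiable ℝ h2)
    (hp1 : ∀ x, 0 < h1 x) (hp2 : ∀ x, 0 < h2 x)
    (w R1 : ℝ → ℝ)
    (hw : ∀ x, w x = 1 / 2 + σ2sq / (2 * P * h2 x) - σ1sq / (2 * P * h1 x))
    (hR1 : ∀ x, R1 x = Real.logb 2 (1 + P * w x * h1 x / σ1sq)) :
    ∀ xstar : ℝ, deriv h1 xstar = 0 →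
      deriv R1 xstar =
        -(σ2sq / (2 * Real.log 2)) * (deriv h2 xstar / (h2 xstar) ^ 2) /
          (σ1sq / h1 xstar + P * w xstar) := by
  intro xstar hderiv
  have hne1 : ∀ x, h1 x ≠ 0 := fun x => (hp1 x).ne'
  have hne2 : ∀ x, h2 x ≠ 0 := fun x => (hp2 x).ne'
  have hPne : P ≠ 0 := hP.ne'
  have hσ1ne : σ1sq ≠ 0 := hσ1.ne'
  -- key algebraic identity for the numerator
  have hkey : ∀ x, P * w x * h1 x = P * h1 x / 2 + σ2sq * h1 x / (2 * h2 x) - σ1sq / 2 := by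
    intro x
    have a1 := hne1 x
    have a2 := hne2 x
    rw [hw]
    field_simp
  set f : ℝ → ℝ := fun x =>
    1 + (P * h1 x / 2 + σ2sq * h1 x / (2 * h2 x) - σ1sq / 2) / σ1sq with hf
  have hfeq : ∀ x, 1 + P * w x * h1 x / σ1sq = f x := by
    intro x; rw [hf]; rw [hkey x]
  have hR1f : R1 = fun x => Real.log (f x) / Real.log 2 := by
    funext x
    rw [hR1 x, hfeq x, Real.logb]
  have hfpos : ∀ x, 0 < f x := by
    intro x
    have key : f x = (σ1sq / 2 + P * h1 x / 2 + σ2sq * h1 x / (2 * h2 x)) / σ1sq := by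
      have a1 := hne1 x
      have a2 := hne2 x
      rw [hf]
      field_simp
      ring
    rw [key]
    have := hp1 x; have := hp2 x
    positivity
  have H1 : HasDerivAt h1 0 xstar := by
    have := (hd1 xstar).hasDerivAt
    rwa [hderiv] at this
  have H2 : HasDerivAt h2 (deriv h2 xstar) xstar := (hd2 xstar).hasDerivAt
  have Hdiv : HasDerivAt (fun x => σ2sq * h1 x / (2 * h2 x))
      ((σ2sq * 0 * (2 * h2 xstar) - σ2sq * h1 xstar * (2 * deriv h2 xstar)) /
        (2 * h2 xstar) ^ 2) xstar :=
    (H1.const_mul σ2sq).div (H2.const_mul 2) (by simp [hne2 xstar])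
  have Hf : HasDerivAt f
      ((P * 0 / 2 + (σ2sq * 0 * (2 * h2 xstar) - σ2sq * h1 xstar * (2 * deriv h2 xstar)) /
        (2 * h2 xstar) ^ 2) / σ1sq) xstar := by
    have h0 : HasDerivAt (fun x => P * h1 x / 2) (P * 0 / 2) xstar :=
      (H1.const_mul P).div_const 2
    exact ((((h0.add Hdiv).sub_const (σ1sq / 2)).div_const σ1sq).const_add 1)
  have Hlog : HasDerivAt (fun x => Real.log (f x) / Real.log 2)
      (((P * 0 / 2 + (σ2sq * 0 * (2 * h2 xstar) - σ2sq * h1 xstar * (2 * deriv h2 xstar)) /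
        (2 * h2 xstar) ^ 2) / σ1sq) / f xstar / Real.log 2) xstar :=
    (Hf.log (hfpos xstar).ne').div_const (Real.log 2)
  rw [hR1f, Hlog.deriv]
  have hlog2 : Real.log 2 ≠ 0 := (Real.log_pos one_lt_two).ne'
  have h1x := hp1 xstar
  have h2x := hp2 xstar
  -- abbreviate S = σ1sq + P w h1
  set S : ℝ := σ1sq + P * w xstar * h1 xstar with hS
  have hfxS : f xstar = S / σ1sq := by
    rw [← hfeq xstar, hS]
    field_simp
  have hSpos : 0 < S := by
    have := hfpos xstar
    rw [hfxS] at this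
    have h := mul_pos this hσ1
    rwa [div_mul_cancel₀ _ hσ1ne] at h
  have hSne : S ≠ 0 := hSpos.ne'
  have hdenS : σ1sq / h1 xstar + P * w xstar = S / h1 xstar := by
    have a1 := hne1 xstar
    rw [hS]; field_simp
  rw [hdenS, hfxS]
  field_simp
  ring
end
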